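/- arXiv:2005.06976 — 5 statements merged into one kernel-verified Lean document; each statement's English description precedes it below -/
import Mathlib

section
/- If Σ + M is invertible, then the orthographic retraction R_X(ξ) = [U(Σ+M) + U_p] (Σ+M)^{-1} [(Σ+M)Vᵀ + V_pᵀ] satisfies the identity R_X(ξ) = X + ξ + U_p (Σ+M)^{-1} V_pᵀ, where X = U Σ Vᵀ and ξ = U M Vᵀ + U_p Vᵀ + U V_pᵀ. -/
open Matrix

theorem Matrix.add_mul_nonsing_inv_mul_add {R : Type*} [CommRing R] {m n k : Type*}
    [Fintype k] [DecidableEq k] (P P' : Matrix m k R) (Q Q' : Matrix k n R)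
    (A : Matrix k k R) (hA : IsUnit A) :
    (P * A + P') * A⁻¹ * (A * Q + Q') = P * A * Q + P' * Q + P * Q' + P' * A⁻¹ * Q' := by
  have hdet : IsUnit A.det := (isUnit_iff_isUnit_det A).mp hA
  simp only [Matrix.add_mul, Matrix.mul_add, Matrix.mul_assoc,
    nonsing_inv_mul_cancel_left A Q hdet, mul_nonsing_inv_cancel_left A Q' hdet]
  abel

theorem stmt_3_general {m n k : ℕ}
    (U : Matrix (Fin m) (Fin k) ℝ) (V : Matrix (Fin n) (Fin k) ℝ)
    (S M : Matrix (Fin k) (Fin k) ℝ)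
    (Up : Matrix (Fin m) (Fin k) ℝ) (Vp : Matrix (Fin n) (Fin k) ℝ)
    (hSM : IsUnit (S + M)) :
    (U * (S + M) + Up) * (S + M)⁻¹ * ((S + M) * Vᵀ + Vpᵀ) =
      U * S * Vᵀ + (U * M * Vᵀ + Up * Vᵀ + U * Vpᵀ) + Up * (S + M)⁻¹ * Vpᵀ := by
  rw [add_mul_nonsing_inv_mul_add U Up Vᵀ Vpᵀ (S + M) hSM, Matrix.mul_add U S M, Matrix.add_mul]
  abel

/-- If `Σ + M` is invertible, the orthographic retraction satisfies
`R_X(ξ) = X + ξ + U_p (Σ+M)⁻¹ V_pᵀ`. -/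
theorem stmt_3 {m n k : ℕ} (hm : 0 < m) (hn : 0 < n) (hk : 0 < k)
    (hkm : k ≤ m) (hkn : k ≤ n)
    (U : Matrix (Fin m) (Fin k) ℝ) (V : Matrix (Fin n) (Fin k) ℝ)
    (hU : Uᵀ * U = 1) (hV : Vᵀ * V = 1)
    (S M : Matrix (Fin k) (Fin k) ℝ)
    (Up : Matrix (Fin m) (Fin k) ℝ) (Vp : Matrix (Fin n) (Fin k) ℝ)
    (hUp : Uᵀ * Up = 0) (hVp : Vᵀ * Vp = 0)
    (hSM : IsUnit (S + M)) :
    (U * (S + M) + Up) * (S + M)⁻¹ * ((S + M) * Vᵀ + Vpᵀ) =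
      U * S * Vᵀ + (U * M * Vᵀ + Up * Vᵀ + U * Vpᵀ) + Up * (S + M)⁻¹ * Vpᵀ :=
  stmt_3_general U V S M Up Vp hSM
end

section
/- If Σ + M is invertible, then the difference R_X(ξ) − (X + ξ) = U_p (Σ+M)^{-1} V_pᵀ lies in the normal space at X: it is Frobenius-orthogonal to every matrix of the form U M' Vᵀ + U_p' Vᵀ + U V_p'ᵀ with Uᵀ U_p' = 0 and Vᵀ V_p' = 0, and equivalently satisfies P_X(U_p (Σ+M)^{-1} V_pᵀ) = 0, where P_X(Z) = U Uᵀ Z V Vᵀ + (I − U Uᵀ) Z V Vᵀ + U Uᵀ Z (I − V Vᵀ). -/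
open Matrix

/-! The retraction error is `U_p (Σ+M)⁻¹ V_pᵀ`, which is killed by `Uᵀ` on the left and by `V`
on the right. Every tangent vector is a sum of terms of the form `U A` and `B Vᵀ`, and by
cyclicity of the trace both kinds are Frobenius-orthogonal to such a matrix; the same two
identities make each summand of `P_X` vanish. -/

namespace Matrix

variable {R : Type*} [CommRing R] {l m n o : Type*} [Fintype l]

theorem add_mul_nonsing_inv_mul_add_s4 [DecidableEq l] {A : Matrix l l R} (hA : IsUnit A)
    (U Up : Matrix m l R) (W Wp : Matrix l n R) :
    (U * A + Up) * A⁻¹ * (A * W + Wp) = U * A * W + Up * W + U * Wp + Up * A⁻¹ * Wp := by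
  have hdet : IsUnit A.det := (isUnit_iff_isUnit_det A).mp hA
  have hAA : A * A⁻¹ = 1 := mul_nonsing_inv A hdet
  have hAA' : A⁻¹ * A = 1 := nonsing_inv_mul A hdet
  simp only [Matrix.add_mul, Matrix.mul_add, Matrix.mul_assoc, ← Matrix.mul_assoc A⁻¹ A,
    hAA, hAA', Matrix.one_mul]
  abel

section

variable [Fintype m] [Fintype n] [Fintype o]

theorem trace_transpose_mul_eq_zero_of_transpose_mul_eq_zero {U : Matrix m l R}
    {Z : Matrix m n R} (hZ : Uᵀ * Z = 0) (A : Matrix l n R) :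
    trace ((U * A)ᵀ * Z) = 0 := by
  rw [transpose_mul, Matrix.mul_assoc, hZ, Matrix.mul_zero, trace_zero]

theorem trace_transpose_mul_eq_zero_of_mul_eq_zero {V : Matrix n o R}
    {Z : Matrix m n R} (hZ : Z * V = 0) (B : Matrix m o R) :
    trace ((B * Vᵀ)ᵀ * Z) = 0 := by
  rw [transpose_mul, transpose_transpose, trace_mul_cycle, hZ, Matrix.zero_mul, trace_zero]

theorem tangent_projection_eq_zero [DecidableEq m] [DecidableEq n]
    {U : Matrix m l R} {V : Matrix n o R} {Z : Matrix m n R} (hUZ : Uᵀ * Z = 0) (hZV : Z * V = 0) :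
    U * Uᵀ * Z * (V * Vᵀ) + (1 - U * Uᵀ) * Z * (V * Vᵀ) + U * Uᵀ * Z * (1 - V * Vᵀ) = 0 := by
  simp only [Matrix.mul_assoc, ← Matrix.mul_assoc Z V, hUZ, hZV, Matrix.zero_mul,
    Matrix.mul_zero, add_zero]

end

end Matrix

theorem stmt_4_general {m n k : ℕ}
    (U : Matrix (Fin m) (Fin k) ℝ) (V : Matrix (Fin n) (Fin k) ℝ)
    (S M : Matrix (Fin k) (Fin k) ℝ)
    (Up : Matrix (Fin m) (Fin k) ℝ) (Vp : Matrix (Fin n) (Fin k) ℝ)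
    (hUp : Uᵀ * Up = 0) (hVp : Vᵀ * Vp = 0)
    (hSM : IsUnit (S + M))
    (P : Matrix (Fin m) (Fin n) ℝ → Matrix (Fin m) (Fin n) ℝ)
    (hP : ∀ Z, P Z =
        U * Uᵀ * Z * (V * Vᵀ) + (1 - U * Uᵀ) * Z * (V * Vᵀ)
          + U * Uᵀ * Z * (1 - V * Vᵀ)) :
    (U * (S + M) + Up) * (S + M)⁻¹ * ((S + M) * Vᵀ + Vpᵀ)
        - (U * S * Vᵀ + (U * M * Vᵀ + Up * Vᵀ + U * Vpᵀ)) =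
      Up * (S + M)⁻¹ * Vpᵀ ∧
    (∀ (M' : Matrix (Fin k) (Fin k) ℝ) (Up' : Matrix (Fin m) (Fin k) ℝ)
        (Vp' : Matrix (Fin n) (Fin k) ℝ), Uᵀ * Up' = 0 → Vᵀ * Vp' = 0 →
        Matrix.trace ((U * M' * Vᵀ + Up' * Vᵀ + U * Vp'ᵀ)ᵀ
          * (Up * (S + M)⁻¹ * Vpᵀ)) = 0) ∧
    P (Up * (S + M)⁻¹ * Vpᵀ) = 0 := by
  have hUN : Uᵀ * (Up * (S + M)⁻¹ * Vpᵀ) = 0 := by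
    rw [Matrix.mul_assoc Up, ← Matrix.mul_assoc, hUp, Matrix.zero_mul]
  have hNV : Up * (S + M)⁻¹ * Vpᵀ * V = 0 := by
    rw [Matrix.mul_assoc, ← transpose_transpose V, ← transpose_mul, hVp, transpose_zero,
      Matrix.mul_zero]
  refine ⟨?_, fun M' Up' Vp' _ _ => ?_, ?_⟩
  · rw [add_mul_nonsing_inv_mul_add_s4 hSM, Matrix.mul_add U S M, Matrix.add_mul (U * S)]
    abel
  · rw [Matrix.mul_assoc U M', transpose_add, transpose_add, Matrix.add_mul, Matrix.add_mul,
      trace_add, trace_add, trace_transpose_mul_eq_zero_of_transpose_mul_eq_zero hUN,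
      trace_transpose_mul_eq_zero_of_mul_eq_zero hNV,
      trace_transpose_mul_eq_zero_of_transpose_mul_eq_zero hUN, add_zero, add_zero]
  · rw [hP, tangent_projection_eq_zero hUN hNV]

/-- If `Σ + M` is invertible, the difference
`R_X(ξ) − (X + ξ) = U_p (Σ+M)⁻¹ V_pᵀ` lies in the normal space at `X`:
it is Frobenius-orthogonal to every tangent vector
`U M' Vᵀ + U_p' Vᵀ + U V_p'ᵀ`, and satisfies `P_X(U_p (Σ+M)⁻¹ V_pᵀ) = 0`. -/
theorem stmt_4 {m n k : ℕ} (hm : 0 < m) (hn : 0 < n) (hk : 0 < k)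
    (hkm : k ≤ m) (hkn : k ≤ n)
    (U : Matrix (Fin m) (Fin k) ℝ) (V : Matrix (Fin n) (Fin k) ℝ)
    (hU : Uᵀ * U = 1) (hV : Vᵀ * V = 1)
    (S M : Matrix (Fin k) (Fin k) ℝ)
    (Up : Matrix (Fin m) (Fin k) ℝ) (Vp : Matrix (Fin n) (Fin k) ℝ)
    (hUp : Uᵀ * Up = 0) (hVp : Vᵀ * Vp = 0)
    (hSM : IsUnit (S + M))
    (P : Matrix (Fin m) (Fin n) ℝ → Matrix (Fin m) (Fin n) ℝ)
    (hP : ∀ Z, P Z =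
        U * Uᵀ * Z * (V * Vᵀ) + (1 - U * Uᵀ) * Z * (V * Vᵀ)
          + U * Uᵀ * Z * (1 - V * Vᵀ)) :
    (U * (S + M) + Up) * (S + M)⁻¹ * ((S + M) * Vᵀ + Vpᵀ)
        - (U * S * Vᵀ + (U * M * Vᵀ + Up * Vᵀ + U * Vpᵀ)) =
      Up * (S + M)⁻¹ * Vpᵀ ∧
    (∀ (M' : Matrix (Fin k) (Fin k) ℝ) (Up' : Matrix (Fin m) (Fin k) ℝ)
        (Vp' : Matrix (Fin n) (Fin k) ℝ), Uᵀ * Up' = 0 → Vᵀ * Vp' = 0 →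
        Matrix.trace ((U * M' * Vᵀ + Up' * Vᵀ + U * Vp'ᵀ)ᵀ
          * (Up * (S + M)⁻¹ * Vpᵀ)) = 0) ∧
    P (Up * (S + M)⁻¹ * Vpᵀ) = 0 :=
  stmt_4_general U V S M Up Vp hUp hVp hSM P hP
end

section
/- If Σ + M is invertible, then the matrix R_X(ξ) = [U(Σ+M) + U_p] (Σ+M)^{-1} [(Σ+M)Vᵀ + V_pᵀ] has rank exactly k; in particular, the left factor U(Σ+M) + U_p ∈ ℝ^{m×k} and the right factor (Σ+M)Vᵀ + V_pᵀ ∈ ℝ^{k×n} have full rank k (e.g., because (U(Σ+M)+U_p)ᵀ(U(Σ+M)+U_p) = (Σ+M)ᵀ(Σ+M) + U_pᵀU_p is positive definite). -/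
/-!
Write `N = Σ + M`. Since `Uᵀ U = 1` and `Uᵀ U_p = 0`, the Gram matrix of the left factor
`A = U N + U_p` is `Nᵀ N + U_pᵀ U_p`, positive definite because `N` is invertible; hence `A` has
the left inverse `(Aᵀ A)⁻¹ Aᵀ`. Symmetrically the right factor `B = N Vᵀ + V_pᵀ` has the right
inverse `Bᵀ (B Bᵀ)⁻¹`. Multiplying by a left-invertible matrix on the left and a right-invertible
one on the right preserves rank, so `rank (A N⁻¹ B) = rank N⁻¹ = k`; the same one-sided inverses
give `rank A = rank B = k`.
-/

open Matrix

namespace Matrix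

variable {m n k l : Type*} [Fintype m] [Fintype n] [Fintype k] [Fintype l] [DecidableEq k]

theorem transpose_mul_self_of_orthogonal {R : Type*} [CommRing R] {U P : Matrix m k R}
    (N : Matrix k k R) (hU : Uᵀ * U = 1) (hP : Uᵀ * P = 0) :
    (U * N + P)ᵀ * (U * N + P) = Nᵀ * N + Pᵀ * P := by
  have hP' : Pᵀ * U = 0 := by rw [← transpose_transpose U, ← transpose_mul, hP, transpose_zero]
  simp only [transpose_add, transpose_mul, Matrix.add_mul, Matrix.mul_add, Matrix.mul_assoc]
  simp [← Matrix.mul_assoc Uᵀ, ← Matrix.mul_assoc Pᵀ U, hU, hP, hP']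

theorem posDef_transpose_mul_self_add {N : Matrix k k ℝ} (hN : IsUnit N) (P : Matrix m k ℝ) :
    (Nᵀ * N + Pᵀ * P).PosDef :=
  (PosDef.conjTranspose_mul_self N (mulVec_injective_iff_isUnit.mpr hN)).add_posSemidef
    (posSemidef_conjTranspose_mul_self P)

variable {K : Type*} [Field K]

theorem nonsing_inv_transpose_mul_self_mul_transpose_mul
    {A : Matrix m k K} (h : IsUnit (Aᵀ * A)) : (Aᵀ * A)⁻¹ * Aᵀ * A = 1 := by
  rw [Matrix.mul_assoc, nonsing_inv_mul _ ((isUnit_iff_isUnit_det _).mp h)]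

theorem mul_transpose_mul_nonsing_inv_mul_transpose_self
    {B : Matrix k n K} (h : IsUnit (B * Bᵀ)) : B * (Bᵀ * (B * Bᵀ)⁻¹) = 1 := by
  rw [← Matrix.mul_assoc, mul_nonsing_inv _ ((isUnit_iff_isUnit_det _).mp h)]

theorem rank_mul_mul_of_mul_eq_one [DecidableEq l]
    {A : Matrix m k K} {C : Matrix k l K} {B : Matrix l n K} {L : Matrix k m K}
    {R : Matrix n l K} (hLA : L * A = 1) (hBR : B * R = 1) :
    (A * C * B).rank = C.rank := by
  refine le_antisymm ((rank_mul_le_left _ _).trans (rank_mul_le_right _ _)) ?_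
  calc C.rank = (L * (A * C * B) * R).rank := by
        rw [← Matrix.mul_assoc, ← Matrix.mul_assoc, hLA, Matrix.mul_assoc, hBR]; simp
    _ ≤ (A * C * B).rank := (rank_mul_le_left _ _).trans (rank_mul_le_right _ _)

theorem rank_eq_card_width_of_mul_eq_one {A : Matrix m k K}
    {L : Matrix k m K} (hLA : L * A = 1) : A.rank = Fintype.card k :=
  le_antisymm (rank_le_card_width A) <| by
    simpa [hLA] using rank_mul_le_right L A

theorem rank_eq_card_height_of_mul_eq_one {B : Matrix k n K}
    {R : Matrix n k K} (hBR : B * R = 1) : B.rank = Fintype.card k :=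
  le_antisymm (rank_le_card_height B) <| by
    simpa [hBR] using rank_mul_le_left B R

end Matrix

theorem stmt_5_general {m n k : ℕ}
    (U : Matrix (Fin m) (Fin k) ℝ) (V : Matrix (Fin n) (Fin k) ℝ)
    (hU : Uᵀ * U = 1) (hV : Vᵀ * V = 1)
    (S M : Matrix (Fin k) (Fin k) ℝ)
    (Up : Matrix (Fin m) (Fin k) ℝ) (Vp : Matrix (Fin n) (Fin k) ℝ)
    (hUp : Uᵀ * Up = 0) (hVp : Vᵀ * Vp = 0)
    (hSM : IsUnit (S + M)) :
    Matrix.rank ((U * (S + M) + Up) * (S + M)⁻¹ * ((S + M) * Vᵀ + Vpᵀ)) = k ∧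
    Matrix.rank (U * (S + M) + Up) = k ∧
    Matrix.rank ((S + M) * Vᵀ + Vpᵀ) = k ∧
    (U * (S + M) + Up)ᵀ * (U * (S + M) + Up) = (S + M)ᵀ * (S + M) + Upᵀ * Up ∧
    ((U * (S + M) + Up)ᵀ * (U * (S + M) + Up)).PosDef := by
  set N := S + M
  have hGramA := transpose_mul_self_of_orthogonal N hU hUp
  have hGramB : (N * Vᵀ + Vpᵀ) * (N * Vᵀ + Vpᵀ)ᵀ = N * Nᵀ + Vpᵀ * Vp := by
    simpa [transpose_mul] using transpose_mul_self_of_orthogonal Nᵀ hV hVp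
  have hPDA := hGramA ▸ posDef_transpose_mul_self_add hSM Up
  have hPDB : ((N * Vᵀ + Vpᵀ) * (N * Vᵀ + Vpᵀ)ᵀ).PosDef := by
    rw [hGramB]
    simpa using posDef_transpose_mul_self_add ((isUnit_transpose _).mpr hSM) Vp
  have hL := nonsing_inv_transpose_mul_self_mul_transpose_mul hPDA.isUnit
  have hR := mul_transpose_mul_nonsing_inv_mul_transpose_self hPDB.isUnit
  refine ⟨?_, ?_, ?_, hGramA, hPDA⟩
  · rw [rank_mul_mul_of_mul_eq_one hL hR, rank_of_isUnit _ (isUnit_nonsing_inv_iff.mpr hSM),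
      Fintype.card_fin]
  · rw [rank_eq_card_width_of_mul_eq_one hL, Fintype.card_fin]
  · rw [rank_eq_card_height_of_mul_eq_one hR, Fintype.card_fin]

/-- If `Σ + M` is invertible, then `R_X(ξ)` has rank exactly `k`;
in particular the left factor `U(Σ+M)+U_p` and right factor `(Σ+M)Vᵀ+V_pᵀ`
have full rank `k`, e.g. because the Gram matrix
`(U(Σ+M)+U_p)ᵀ(U(Σ+M)+U_p) = (Σ+M)ᵀ(Σ+M) + U_pᵀU_p` is positive definite. -/
theorem stmt_5 {m n k : ℕ} (hm : 0 < m) (hn : 0 < n) (hk : 0 < k)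
    (hkm : k ≤ m) (hkn : k ≤ n)
    (U : Matrix (Fin m) (Fin k) ℝ) (V : Matrix (Fin n) (Fin k) ℝ)
    (hU : Uᵀ * U = 1) (hV : Vᵀ * V = 1)
    (S M : Matrix (Fin k) (Fin k) ℝ)
    (Up : Matrix (Fin m) (Fin k) ℝ) (Vp : Matrix (Fin n) (Fin k) ℝ)
    (hUp : Uᵀ * Up = 0) (hVp : Vᵀ * Vp = 0)
    (hSM : IsUnit (S + M)) :
    Matrix.rank ((U * (S + M) + Up) * (S + M)⁻¹ * ((S + M) * Vᵀ + Vpᵀ)) = k ∧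
    Matrix.rank (U * (S + M) + Up) = k ∧
    Matrix.rank ((S + M) * Vᵀ + Vpᵀ) = k ∧
    (U * (S + M) + Up)ᵀ * (U * (S + M) + Up) = (S + M)ᵀ * (S + M) + Upᵀ * Up ∧
    ((U * (S + M) + Up)ᵀ * (U * (S + M) + Up)).PosDef :=
  stmt_5_general U V hU hV S M Up Vp hUp hVp hSM
end

section
/- If Σ + M is invertible, then the orthographic retraction is inverted by the tangent-space projection: P_X(R_X(ξ)) − X = ξ, where P_X(Z) = U Uᵀ Z V Vᵀ + (I − U Uᵀ) Z V Vᵀ + U Uᵀ Z (I − V Vᵀ) and R_X(ξ) = [U(Σ+M) + U_p] (Σ+M)^{-1} [(Σ+M)Vᵀ + V_pᵀ]. In other words, the map Y ↦ P_X(Y) − X is a left inverse of R_X on tangent vectors with invertible Σ + M. -/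
/-!
Write `A = Σ + M`. Expanding the product, `R_X(ξ) = U (A Vᵀ + V_pᵀ) + U_p Vᵀ + U_p A⁻¹ V_pᵀ`.
The projection `P_X` fixes every matrix of the form `U X + Y Vᵀ` (the tangent space at `X`) and
kills `U_p A⁻¹ V_pᵀ`, whose columns are orthogonal to those of `U` and whose rows are orthogonal
to those of `V`. Hence `P_X(R_X(ξ)) = U A Vᵀ + U V_pᵀ + U_p Vᵀ = X + ξ`.
-/

open Matrix

namespace Matrix

variable {R : Type*} [CommRing R] {m n k : Type*} [Fintype k]

theorem orthographic_retraction_expand {U Up : Matrix m k R} {V Vp : Matrix n k R}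
    {A : Matrix k k R} [DecidableEq k] (hA : IsUnit A) :
    (U * A + Up) * A⁻¹ * (A * Vᵀ + Vpᵀ) = U * (A * Vᵀ + Vpᵀ) + Up * Vᵀ + Up * A⁻¹ * Vpᵀ := by
  have hdet : IsUnit A.det := (isUnit_iff_isUnit_det A).mp hA
  rw [Matrix.add_mul, Matrix.mul_assoc U, mul_nonsing_inv A hdet, Matrix.mul_one,
    Matrix.add_mul U, Matrix.mul_add (Up * A⁻¹), ← Matrix.mul_assoc (Up * A⁻¹) A,
    Matrix.mul_assoc Up A⁻¹ A, nonsing_inv_mul A hdet, Matrix.mul_one, add_assoc]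

variable [Fintype m] [Fintype n] [DecidableEq m] [DecidableEq n]

/-- The projection `P_X` for `X = U Σ Vᵀ`; it does not depend on `Σ`. -/
def tangentProj (U : Matrix m k R) (V : Matrix n k R) (Z : Matrix m n R) : Matrix m n R :=
  U * Uᵀ * Z * (V * Vᵀ) + (1 - U * Uᵀ) * Z * (V * Vᵀ) + U * Uᵀ * Z * (1 - V * Vᵀ)

theorem tangentProj_add (U : Matrix m k R) (V : Matrix n k R) (Z W : Matrix m n R) :
    tangentProj U V (Z + W) = tangentProj U V Z + tangentProj U V W := by
  simp only [tangentProj, Matrix.mul_add, Matrix.add_mul]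
  abel

theorem tangentProj_mul_left [DecidableEq k] {U : Matrix m k R} (V : Matrix n k R)
    (hU : Uᵀ * U = 1) (X : Matrix k n R) : tangentProj U V (U * X) = U * X := by
  have hUUX : U * Uᵀ * (U * X) = U * X := by
    rw [Matrix.mul_assoc, ← Matrix.mul_assoc Uᵀ, hU, Matrix.one_mul]
  simp only [tangentProj, hUUX, Matrix.sub_mul, Matrix.one_mul, sub_self, Matrix.zero_mul,
    add_zero, Matrix.mul_sub, Matrix.mul_one]
  abel

theorem tangentProj_mul_transpose [DecidableEq k] (U : Matrix m k R) {V : Matrix n k R}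
    (hV : Vᵀ * V = 1) (Y : Matrix m k R) : tangentProj U V (Y * Vᵀ) = Y * Vᵀ := by
  have hYVV : Y * Vᵀ * (V * Vᵀ) = Y * Vᵀ := by
    rw [Matrix.mul_assoc, ← Matrix.mul_assoc Vᵀ, hV, Matrix.one_mul]
  simp only [tangentProj, Matrix.mul_assoc _ (Y * Vᵀ), hYVV, Matrix.mul_sub, Matrix.mul_one,
    sub_self, Matrix.mul_zero, add_zero, Matrix.sub_mul, Matrix.one_mul]
  abel

theorem tangentProj_eq_zero (U : Matrix m k R) (V : Matrix n k R) {Z : Matrix m n R}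
    (hUZ : Uᵀ * Z = 0) (hZV : Z * V = 0) : tangentProj U V Z = 0 := by
  have hUUZ : U * Uᵀ * Z = 0 := by rw [Matrix.mul_assoc, hUZ, Matrix.mul_zero]
  have hZVV : Z * (V * Vᵀ) = 0 := by rw [← Matrix.mul_assoc, hZV, Matrix.zero_mul]
  simp only [tangentProj, hUUZ, Matrix.mul_assoc _ Z, hZVV, Matrix.zero_mul, Matrix.mul_zero,
    add_zero]

end Matrix

theorem stmt_6_general {m n k : ℕ}
    (U : Matrix (Fin m) (Fin k) ℝ) (V : Matrix (Fin n) (Fin k) ℝ)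
    (hU : Uᵀ * U = 1) (hV : Vᵀ * V = 1)
    (S M : Matrix (Fin k) (Fin k) ℝ)
    (Up : Matrix (Fin m) (Fin k) ℝ) (Vp : Matrix (Fin n) (Fin k) ℝ)
    (hUp : Uᵀ * Up = 0) (hVp : Vᵀ * Vp = 0)
    (hSM : IsUnit (S + M))
    (P : Matrix (Fin m) (Fin n) ℝ → Matrix (Fin m) (Fin n) ℝ)
    (hP : ∀ Z, P Z =
        U * Uᵀ * Z * (V * Vᵀ) + (1 - U * Uᵀ) * Z * (V * Vᵀ)
          + U * Uᵀ * Z * (1 - V * Vᵀ)) :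
    P ((U * (S + M) + Up) * (S + M)⁻¹ * ((S + M) * Vᵀ + Vpᵀ)) - U * S * Vᵀ =
      U * M * Vᵀ + Up * Vᵀ + U * Vpᵀ := by
  have hP_eq : P = tangentProj U V := funext hP
  have hVpV : Vpᵀ * V = 0 := by rw [← transpose_transpose V, ← transpose_mul, hVp, transpose_zero]
  have hnormal : tangentProj U V (Up * (S + M)⁻¹ * Vpᵀ) = 0 :=
    tangentProj_eq_zero U V (by rw [← Matrix.mul_assoc, ← Matrix.mul_assoc, hUp,
      Matrix.zero_mul, Matrix.zero_mul]) (by rw [Matrix.mul_assoc, hVpV, Matrix.mul_zero])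
  rw [hP_eq, orthographic_retraction_expand hSM, tangentProj_add, tangentProj_add, hnormal,
    tangentProj_mul_left V hU, tangentProj_mul_transpose U hV]
  simp only [Matrix.mul_add, Matrix.add_mul, Matrix.mul_assoc]
  abel

/-- If `Σ + M` is invertible, the orthographic retraction is
inverted by the tangent-space projection: `P_X(R_X(ξ)) − X = ξ`. -/
theorem stmt_6 {m n k : ℕ} (hm : 0 < m) (hn : 0 < n) (hk : 0 < k)
    (hkm : k ≤ m) (hkn : k ≤ n)
    (U : Matrix (Fin m) (Fin k) ℝ) (V : Matrix (Fin n) (Fin k) ℝ)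
    (hU : Uᵀ * U = 1) (hV : Vᵀ * V = 1)
    (S M : Matrix (Fin k) (Fin k) ℝ)
    (Up : Matrix (Fin m) (Fin k) ℝ) (Vp : Matrix (Fin n) (Fin k) ℝ)
    (hUp : Uᵀ * Up = 0) (hVp : Vᵀ * Vp = 0)
    (hSM : IsUnit (S + M))
    (P : Matrix (Fin m) (Fin n) ℝ → Matrix (Fin m) (Fin n) ℝ)
    (hP : ∀ Z, P Z =
        U * Uᵀ * Z * (V * Vᵀ) + (1 - U * Uᵀ) * Z * (V * Vᵀ)
          + U * Uᵀ * Z * (1 - V * Vᵀ)) :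
    P ((U * (S + M) + Up) * (S + M)⁻¹ * ((S + M) * Vᵀ + Vpᵀ)) - U * S * Vᵀ =
      U * M * Vᵀ + Up * Vᵀ + U * Vpᵀ :=
  stmt_6_general U V hU hV S M Up Vp hUp hVp hSM P hP
end

section
/- For every t such that Σ + tM is invertible, the derivative of the retraction curve admits the rank-3k factorization d/dt R_X(tξ) = G Hᵀ, where G ∈ ℝ^{m×3k} has the three column blocks G₁ = −(U + tU_p(Σ+tM)^{-1}) M (Σ+tM)^{-1}, G₂ = U + tU_p(Σ+tM)^{-1}, G₃ = U_p + UM, and H ∈ ℝ^{n×3k} has the three column blocks H₁ = V(Σ+tM)ᵀ + tV_p, H₂ = VMᵀ + V_p, H₃ = V + tV_p(Σ+tM)^{-T}; that is, G₁H₁ᵀ + G₂H₂ᵀ + G₃H₃ᵀ equals the expression (U(Σ+tM)+tU_p)(Σ+tM)^{-1}(MVᵀ+V_pᵀ) − (U(Σ+tM)+tU_p)(Σ+tM)^{-1} M (Σ+tM)^{-1}((Σ+tM)Vᵀ+tV_pᵀ) + (U_p+UM)(Σ+tM)^{-1}((Σ+tM)Vᵀ+tV_pᵀ). -/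
open Matrix

namespace Matrix

variable {l m n R : Type*} [Fintype n] [DecidableEq n] [CommRing R]

theorem add_smul_mul_nonsing_inv {A : Matrix n n R} (hA : IsUnit A) (U W : Matrix m n R) (t : R) :
    (U * A + t • W) * A⁻¹ = U + t • (W * A⁻¹) := by
  rw [Matrix.add_mul, mul_nonsing_inv_cancel_right _ _ ((isUnit_iff_isUnit_det A).mp hA),
    Matrix.smul_mul]

theorem nonsing_inv_mul_add_smul {A : Matrix n n R} (hA : IsUnit A) (V W : Matrix n l R) (t : R) :
    A⁻¹ * (A * V + t • W) = V + t • (A⁻¹ * W) := by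
  rw [Matrix.mul_add, nonsing_inv_mul_cancel_left _ _ ((isUnit_iff_isUnit_det A).mp hA),
    Matrix.mul_smul]

end Matrix

/-- Cancelling `(Σ + tM) (Σ + tM)⁻¹` turns the three terms of the derivative into
`G₂ H₂ᵀ`, `G₁ H₁ᵀ` and `G₃ H₃ᵀ` respectively. -/
theorem stmt_10_general {m n k : ℕ}
    (U : Matrix (Fin m) (Fin k) ℝ) (V : Matrix (Fin n) (Fin k) ℝ)
    (S M : Matrix (Fin k) (Fin k) ℝ)
    (Up : Matrix (Fin m) (Fin k) ℝ) (Vp : Matrix (Fin n) (Fin k) ℝ)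
    (t : ℝ) (ht : IsUnit (S + t • M))
    (G₁ G₂ G₃ : Matrix (Fin m) (Fin k) ℝ)
    (H₁ H₂ H₃ : Matrix (Fin n) (Fin k) ℝ)
    (hG₁ : G₁ = -((U + t • (Up * (S + t • M)⁻¹)) * M * (S + t • M)⁻¹))
    (hG₂ : G₂ = U + t • (Up * (S + t • M)⁻¹))
    (hG₃ : G₃ = Up + U * M)
    (hH₁ : H₁ = V * (S + t • M)ᵀ + t • Vp)
    (hH₂ : H₂ = V * Mᵀ + Vp)
    (hH₃ : H₃ = V + t • (Vp * ((S + t • M)⁻¹)ᵀ)) :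
    G₁ * H₁ᵀ + G₂ * H₂ᵀ + G₃ * H₃ᵀ =
      (U * (S + t • M) + t • Up) * (S + t • M)⁻¹ * (M * Vᵀ + Vpᵀ)
        - (U * (S + t • M) + t • Up) * (S + t • M)⁻¹ * M * (S + t • M)⁻¹
            * ((S + t • M) * Vᵀ + t • Vpᵀ)
        + (Up + U * M) * (S + t • M)⁻¹ * ((S + t • M) * Vᵀ + t • Vpᵀ) := by
  subst hG₁ hG₂ hG₃ hH₁ hH₂ hH₃
  rw [add_smul_mul_nonsing_inv ht, Matrix.mul_assoc (Up + U * M), nonsing_inv_mul_add_smul ht]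
  simp only [transpose_add, transpose_smul, transpose_mul, transpose_transpose, Matrix.neg_mul]
  abel

/-- For every `t` with `Σ + tM` invertible, the derivative of the
retraction curve admits the rank-`3k` factorization `G Hᵀ` with the three
column blocks `G₁, G₂, G₃` and `H₁, H₂, H₃`: that is,
`G₁H₁ᵀ + G₂H₂ᵀ + G₃H₃ᵀ` equals the derivative expression. -/
theorem stmt_10 {m n k : ℕ} (hm : 0 < m) (hn : 0 < n) (hk : 0 < k)
    (U : Matrix (Fin m) (Fin k) ℝ) (V : Matrix (Fin n) (Fin k) ℝ)
    (S M : Matrix (Fin k) (Fin k) ℝ)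
    (Up : Matrix (Fin m) (Fin k) ℝ) (Vp : Matrix (Fin n) (Fin k) ℝ)
    (t : ℝ) (ht : IsUnit (S + t • M))
    (G₁ G₂ G₃ : Matrix (Fin m) (Fin k) ℝ)
    (H₁ H₂ H₃ : Matrix (Fin n) (Fin k) ℝ)
    (hG₁ : G₁ = -((U + t • (Up * (S + t • M)⁻¹)) * M * (S + t • M)⁻¹))
    (hG₂ : G₂ = U + t • (Up * (S + t • M)⁻¹))
    (hG₃ : G₃ = Up + U * M)
    (hH₁ : H₁ = V * (S + t • M)ᵀ + t • Vp)
    (hH₂ : H₂ = V * Mᵀ + Vp)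
    (hH₃ : H₃ = V + t • (Vp * ((S + t • M)⁻¹)ᵀ)) :
    G₁ * H₁ᵀ + G₂ * H₂ᵀ + G₃ * H₃ᵀ =
      (U * (S + t • M) + t • Up) * (S + t • M)⁻¹ * (M * Vᵀ + Vpᵀ)
        - (U * (S + t • M) + t • Up) * (S + t • M)⁻¹ * M * (S + t • M)⁻¹
            * ((S + t • M) * Vᵀ + t • Vpᵀ)
        + (Up + U * M) * (S + t • M)⁻¹ * ((S + t • M) * Vᵀ + t • Vpᵀ) :=
  stmt_10_general U V S M Up Vp t ht G₁ G₂ G₃ H₁ H₂ H₃ hG₁ hG₂ hG₃ hH₁ hH₂ hH₃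
end
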